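/- arXiv:1303.2314 — 6 statements merged into one kernel-verified Lean document; each statement's English description precedes it below -/
import Mathlib

section
/- Let v ∈ ℝⁿ, Q̃ ∈ ℝ^{n×n}, and let A be a subset of {1,...,n} of size b chosen uniformly at random. Let v_{[A]} denote the vector equal to v on coordinates in A and 0 elsewhere. Then E[v_{[A]}ᵀ Q̃ v_{[A]}] = (b/n)[(1 - (b-1)/(n-1)) ∑_{i=1}^n Q̃_{ii} v_i² + ((b-1)/(n-1)) vᵀ Q̃ v]. -/
/-!
Expanding the quadratic form, the coefficient of `v i * Q i j * v j` in the sum over `A` is the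
number of `b`-subsets containing `i` and `j`. Double counting the pairs `T ⊆ A` with `#T = k`
gives `#{A ⊇ T} * C(n, k) = C(n, b) * C(b, k)`, so this number is `C(n, b) * b / n` on the
diagonal and `C(n, b) * b (b - 1) / (n (n - 1))` off it; only the constant of the diagonal
differs, which produces the `∑ i, Q i i * v i ^ 2` correction.
-/

open Finset

lemma card_filter_powersetCard_subset_mul_choose {α : Type*} [DecidableEq α]
    {s t : Finset α} (hts : t ⊆ s) (b : ℕ) :
    #{A ∈ s.powersetCard b | t ⊆ A} * (#s).choose #t = (#s).choose b * b.choose #t := by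
  rcases le_or_gt #t b with htb | hbt
  · rw [card_filter_powersetCard_subset t s b hts htb, Nat.choose_mul htb, mul_comm]
  · have hempty : {A ∈ s.powersetCard b | t ⊆ A} = ∅ := by
      refine filter_eq_empty_iff.mpr fun A hA htA => ?_
      have hcard := card_le_card htA
      rw [(mem_powersetCard.mp hA).2] at hcard
      omega
    simp [hempty, Nat.choose_eq_zero_of_lt hbt]

section Counting

variable {ι : Type*} [Fintype ι] [DecidableEq ι]

lemma card_powersetCard_univ_filter_mem (b : ℕ) (i : ι) :
    (#{A ∈ powersetCard b (univ : Finset ι) | i ∈ A} : ℝ)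
      = (Fintype.card ι).choose b * (b / Fintype.card ι) := by
  have hcount := card_filter_powersetCard_subset_mul_choose (subset_univ {i}) b
  simp only [singleton_subset_iff, card_singleton, Nat.choose_one_right, card_univ] at hcount
  have hι : (Fintype.card ι : ℝ) ≠ 0 := Nat.cast_ne_zero.mpr (Fintype.card_pos_iff.mpr ⟨i⟩).ne'
  field_simp
  exact_mod_cast hcount

lemma card_powersetCard_univ_filter_mem_and_mem (b : ℕ) {i j : ι} (hij : i ≠ j) :
    (#{A ∈ powersetCard b (univ : Finset ι) | i ∈ A ∧ j ∈ A} : ℝ)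
      = (Fintype.card ι).choose b
          * (b / Fintype.card ι * ((b - 1) / (Fintype.card ι - 1))) := by
  have hcount := card_filter_powersetCard_subset_mul_choose (subset_univ {i, j}) b
  simp only [insert_subset_iff, singleton_subset_iff, card_pair hij, card_univ] at hcount
  have hcount' := congrArg (Nat.cast : ℕ → ℝ) hcount
  push_cast [Nat.cast_choose_two] at hcount'
  have htwo : (2 : ℝ) ≤ Fintype.card ι := by
    exact_mod_cast Fintype.one_lt_card_iff.mpr ⟨i, j, hij⟩
  have hι : (Fintype.card ι : ℝ) ≠ 0 := by positivity
  have hι' : (Fintype.card ι : ℝ) - 1 ≠ 0 := by linarith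
  field_simp
  linarith

end Counting

lemma sum_censored_quadForm {ι R : Type*} [Fintype ι] [DecidableEq ι] [CommSemiring R]
    (𝒜 : Finset (Finset ι)) (v : ι → R) (Q : Matrix ι ι R) :
    ∑ A ∈ 𝒜, ∑ i, ∑ j, (if i ∈ A then v i else 0) * Q i j * (if j ∈ A then v j else 0)
      = ∑ i, ∑ j, (#{A ∈ 𝒜 | i ∈ A ∧ j ∈ A} : R) * (v i * Q i j * v j) := by
  rw [sum_comm]
  refine sum_congr rfl fun i _ => ?_
  rw [sum_comm]
  refine sum_congr rfl fun j _ => ?_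
  rw [← nsmul_eq_mul, ← sum_const, sum_filter]
  refine sum_congr rfl fun A _ => ?_
  by_cases hi : i ∈ A <;> by_cases hj : j ∈ A <;> simp [hi, hj]

lemma sum_sum_mul_eq_of_diag_offDiag {ι R : Type*} [Fintype ι] [DecidableEq ι] [CommRing R]
    {w : ι → ι → R} {c d : R} (hdiag : ∀ i, w i i = c) (hoff : ∀ i j, i ≠ j → w i j = d)
    (x : ι → ι → R) :
    ∑ i, ∑ j, w i j * x i j = d * ∑ i, ∑ j, x i j + (c - d) * ∑ i, x i i := by
  have hw : ∀ i j, w i j = d + if i = j then c - d else 0 := by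
    intro i j
    by_cases hij : i = j
    · subst hij; simp [hdiag]
    · simp [hoff i j hij, hij]
  simp only [hw, add_mul, ite_mul, zero_mul, sum_add_distrib, sum_ite_eq, mem_univ, if_true,
    mul_sum]

theorem stmt0_general (n b : ℕ) (hbn : b ≤ n)
    (v : Fin n → ℝ) (Q : Matrix (Fin n) (Fin n) ℝ) :
    (∑ A ∈ Finset.powersetCard b (Finset.univ : Finset (Fin n)),
        ∑ i, ∑ j, (if i ∈ A then v i else 0) * Q i j * (if j ∈ A then v j else 0))
      / (n.choose b : ℝ)
    = ((b : ℝ) / n) *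
        ((1 - ((b : ℝ) - 1) / ((n : ℝ) - 1)) * (∑ i, Q i i * (v i) ^ 2)
          + (((b : ℝ) - 1) / ((n : ℝ) - 1)) * (∑ i, ∑ j, v i * Q i j * v j)) := by
  have hC : (n.choose b : ℝ) ≠ 0 := Nat.cast_ne_zero.mpr (Nat.choose_pos hbn).ne'
  have hsingle := card_powersetCard_univ_filter_mem (ι := Fin n) b
  have hpair := fun (i j : Fin n) (hij : i ≠ j) => card_powersetCard_univ_filter_mem_and_mem b hij
  simp only [Fintype.card_fin] at hsingle hpair
  have hdiag : ∑ i, v i * Q i i * v i = ∑ i, Q i i * v i ^ 2 := sum_congr rfl fun i _ => by ring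
  rw [sum_censored_quadForm, sum_sum_mul_eq_of_diag_offDiag
    (fun i => by simpa only [and_self] using hsingle i) hpair, hdiag, div_eq_iff hC]
  ring

/-- Lemma 1 (first part): expectation of the censored quadratic form over a
uniformly random `b`-element subset `A` of `{1,…,n}`. -/
theorem stmt0 (n b : ℕ) (hn : 2 ≤ n) (hb1 : 1 ≤ b) (hbn : b ≤ n)
    (v : Fin n → ℝ) (Q : Matrix (Fin n) (Fin n) ℝ) :
    (∑ A ∈ Finset.powersetCard b (Finset.univ : Finset (Fin n)),
        ∑ i, ∑ j, (if i ∈ A then v i else 0) * Q i j * (if j ∈ A then v j else 0))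
      / (n.choose b : ℝ)
    = ((b : ℝ) / n) *
        ((1 - ((b : ℝ) - 1) / ((n : ℝ) - 1)) * (∑ i, Q i i * (v i) ^ 2)
          + (((b : ℝ) - 1) / ((n : ℝ) - 1)) * (∑ i, ∑ j, v i * Q i j * v j)) :=
  stmt0_general n b hbn v Q
end

section
/- Let v ∈ ℝⁿ, let Q̃ ∈ ℝ^{n×n} be symmetric with Q̃_{ii} ≤ 1 for all i and spectral norm ‖Q̃‖ ≤ n σ², and let A be a uniformly random b-element subset of {1,...,n}. Then E[v_{[A]}ᵀ Q̃ v_{[A]}] ≤ (b/n) β_b ‖v‖², where β_b := 1 + (b-1)(nσ² - 1)/(n-1). -/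
/-!
Expanding the quadratic form, the expectation is `∑ᵢⱼ vᵢ Qᵢⱼ vⱼ · P(i, j ∈ A)`, and
`P(i ∈ A) = b/n =: p₁`, `P(i, j ∈ A) = b(b-1)/(n(n-1)) =: p₂` for `i ≠ j`. Hence the expectation is
`p₂ · vᵀQv + (p₁ - p₂) · ∑ᵢ Qᵢᵢ vᵢ²`; the first term is at most `p₂ ‖Q‖ ‖v‖² ≤ p₂ nσ² ‖v‖²`, the
second at most `(p₁ - p₂) ‖v‖²`, and `p₂ nσ² + p₁ - p₂ = (b/n) β_b`.
-/

open Finset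

theorem Finset.card_filter_powersetCard_subset_mul_descFactorial {α : Type*} [DecidableEq α]
    {s t : Finset α} (hst : s ⊆ t) (k : ℕ) :
    #{A ∈ t.powersetCard k | s ⊆ A} * (#t).descFactorial #s
      = (#t).choose k * k.descFactorial #s := by
  by_cases hsk : #s ≤ k
  · rw [card_filter_powersetCard_subset s t k hst hsk, Nat.descFactorial_eq_factorial_mul_choose,
      Nat.descFactorial_eq_factorial_mul_choose]
    linear_combination (#s).factorial * (Nat.choose_mul (n := #t) hsk).symm
  · have hempty : {A ∈ t.powersetCard k | s ⊆ A} = ∅ :=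
      filter_eq_empty_iff.mpr fun A hA hsA =>
        hsk ((card_le_card hsA).trans (mem_powersetCard.mp hA).2.le)
    rw [hempty, Nat.descFactorial_eq_zero_iff_lt.mpr (not_le.mp hsk)]
    simp

section

variable {ι : Type*} [Fintype ι] [DecidableEq ι]

theorem card_filter_powersetCard_subset_div_choose {k : ℕ} (hk : k ≤ Fintype.card ι)
    (s : Finset ι) :
    (#{A ∈ (univ : Finset ι).powersetCard k | s ⊆ A} : ℝ) / (Fintype.card ι).choose k
      = k.descFactorial #s / (Fintype.card ι).descFactorial #s := by
  have hchoose : ((Fintype.card ι).choose k : ℝ) ≠ 0 := by exact_mod_cast (Nat.choose_pos hk).ne'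
  have hdesc : ((Fintype.card ι).descFactorial #s : ℝ) ≠ 0 := by
    exact_mod_cast (Nat.descFactorial_pos.mpr (card_le_univ s)).ne'
  rw [div_eq_div_iff hchoose hdesc, mul_comm (k.descFactorial #s : ℝ), ← card_univ]
  exact_mod_cast card_filter_powersetCard_subset_mul_descFactorial (subset_univ s) k

theorem card_filter_powersetCard_mem_mem_div_choose {k : ℕ} (hk : k ≤ Fintype.card ι) (i j : ι) :
    (#{A ∈ (univ : Finset ι).powersetCard k | i ∈ A ∧ j ∈ A} : ℝ) / (Fintype.card ι).choose k
      = if i = j then (k : ℝ) / Fintype.card ι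
        else (k : ℝ) * (k - 1) / (Fintype.card ι * (Fintype.card ι - 1)) := by
  have hpair : ∀ A : Finset ι, i ∈ A ∧ j ∈ A ↔ {i, j} ⊆ A := by
    simp [insert_subset_iff]
  simp only [hpair, card_filter_powersetCard_subset_div_choose hk]
  split_ifs with hij
  · simp [hij]
  · rw [card_pair hij, Nat.cast_descFactorial_two, Nat.cast_descFactorial_two]

theorem sum_censored_quadForm_eq_sum_mul_card {R : Type*} [CommSemiring R]
    (𝒜 : Finset (Finset ι)) (v : ι → R) (Q : Matrix ι ι R) :
    ∑ A ∈ 𝒜, ∑ i, ∑ j, (if i ∈ A then v i else 0) * Q i j * (if j ∈ A then v j else 0)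
      = ∑ i, ∑ j, v i * Q i j * v j * #{A ∈ 𝒜 | i ∈ A ∧ j ∈ A} := by
  rw [sum_comm]
  refine sum_congr rfl fun i _ => ?_
  rw [sum_comm]
  refine sum_congr rfl fun j _ => ?_
  simp only [ite_mul, zero_mul, mul_ite, mul_zero, ← ite_and, ← sum_filter, sum_const,
    nsmul_eq_mul, and_comm (a := j ∈ _)]
  exact mul_comm _ _

open scoped RealInnerProductSpace in
theorem sum_mul_mul_le_norm_toEuclideanCLM_mul_sum_sq (Q : Matrix ι ι ℝ) (v : ι → ℝ) :
    ∑ i, ∑ j, v i * Q i j * v j ≤ ‖Matrix.toEuclideanCLM (𝕜 := ℝ) Q‖ * ∑ i, v i ^ 2 := by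
  set x : EuclideanSpace ℝ ι := WithLp.toLp 2 v
  set T := Matrix.toEuclideanCLM (𝕜 := ℝ) Q
  have hquad : ∑ i, ∑ j, v i * Q i j * v j = ⟪x, T x⟫ := by
    simp only [T, Matrix.inner_toEuclideanCLM, dotProduct, Matrix.mulVec, mul_sum, mul_assoc, x]
  calc ∑ i, ∑ j, v i * Q i j * v j ≤ ‖x‖ * ‖T x‖ := hquad ▸ real_inner_le_norm x (T x)
    _ ≤ ‖x‖ * (‖T‖ * ‖x‖) := by gcongr; exact T.le_opNorm x
    _ = ‖T‖ * ∑ i, v i ^ 2 := by rw [← EuclideanSpace.real_norm_sq_eq x]; ring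

theorem sum_powersetCard_censored_quadForm_div_choose {k : ℕ} (hk : k ≤ Fintype.card ι)
    (v : ι → ℝ) (Q : Matrix ι ι ℝ) :
    (∑ A ∈ (univ : Finset ι).powersetCard k,
        ∑ i, ∑ j, (if i ∈ A then v i else 0) * Q i j * (if j ∈ A then v j else 0))
      / (Fintype.card ι).choose k
      = (k : ℝ) * (k - 1) / (Fintype.card ι * (Fintype.card ι - 1)) * ∑ i, ∑ j, v i * Q i j * v j
        + ((k : ℝ) / Fintype.card ι - (k : ℝ) * (k - 1) / (Fintype.card ι * (Fintype.card ι - 1)))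
          * ∑ i, v i ^ 2 * Q i i := by
  set p₁ : ℝ := k / Fintype.card ι
  set p₂ : ℝ := k * (k - 1) / (Fintype.card ι * (Fintype.card ι - 1))
  have hweight : ∀ i j : ι, v i * Q i j * v j
      * #{A ∈ (univ : Finset ι).powersetCard k | i ∈ A ∧ j ∈ A} / (Fintype.card ι).choose k
      = p₂ * (v i * Q i j * v j) + if i = j then (p₁ - p₂) * (v i ^ 2 * Q i i) else 0 := by
    intro i j
    rw [mul_div_assoc, card_filter_powersetCard_mem_mem_div_choose hk]
    split_ifs with hij
    · subst hij; ring
    · ring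
  simp only [sum_censored_quadForm_eq_sum_mul_card, sum_div, hweight, sum_add_distrib, sum_ite_eq,
    mem_univ, if_true, ← mul_sum]

end

theorem stmt1_general (n b : ℕ) (hn : 2 ≤ n) (hb1 : 1 ≤ b) (hbn : b ≤ n)
    (v : Fin n → ℝ) (Q : Matrix (Fin n) (Fin n) ℝ)
    (hdiag : ∀ i, Q i i ≤ 1) (σ2 : ℝ)
    (hspec : ‖Matrix.toEuclideanCLM (𝕜 := ℝ) Q‖ ≤ (n : ℝ) * σ2) :
    (∑ A ∈ Finset.powersetCard b (Finset.univ : Finset (Fin n)),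
        ∑ i, ∑ j, (if i ∈ A then v i else 0) * Q i j * (if j ∈ A then v j else 0))
      / (n.choose b : ℝ)
    ≤ ((b : ℝ) / n) * (1 + ((b : ℝ) - 1) * ((n : ℝ) * σ2 - 1) / ((n : ℝ) - 1))
        * (∑ i, (v i) ^ 2) := by
  have hexpect := sum_powersetCard_censored_quadForm_div_choose
    (hbn.trans_eq (Fintype.card_fin n).symm) v Q
  rw [Fintype.card_fin] at hexpect
  rw [hexpect]
  have hn₁ : (1 : ℝ) < n := by exact_mod_cast hn
  have hb₁ : (1 : ℝ) ≤ b := by exact_mod_cast hb1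
  have hbn' : (b : ℝ) ≤ n := by exact_mod_cast hbn
  have hp₂ : 0 ≤ (b : ℝ) * (b - 1) / (n * (n - 1)) := by
    apply div_nonneg <;> nlinarith
  have hp₁₂ : (b : ℝ) * (b - 1) / (n * (n - 1)) ≤ b / n := by
    rw [div_le_div_iff₀ (by nlinarith) (by linarith)]
    nlinarith [mul_nonneg (mul_nonneg (b.cast_nonneg : (0 : ℝ) ≤ b) (n.cast_nonneg : (0 : ℝ) ≤ n))
      (sub_nonneg.mpr hbn')]
  have hquad := (sum_mul_mul_le_norm_toEuclideanCLM_mul_sum_sq Q v).trans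
    (mul_le_mul_of_nonneg_right hspec (by positivity))
  have hdiagsum : ∑ i, v i ^ 2 * Q i i ≤ ∑ i, v i ^ 2 :=
    sum_le_sum fun i _ => mul_le_of_le_one_right (sq_nonneg _) (hdiag i)
  calc _ ≤ (b : ℝ) * (b - 1) / (n * (n - 1)) * (n * σ2 * ∑ i, v i ^ 2)
        + ((b : ℝ) / n - (b : ℝ) * (b - 1) / (n * (n - 1))) * ∑ i, v i ^ 2 := by
        gcongr
    _ = _ := by
        field_simp
        ring

/-- Lemma 1 (second part): if `Q` is symmetric with unit-bounded diagonal and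
spectral norm at most `n σ²`, then the expected censored quadratic form is at
most `(b/n) β_b ‖v‖²`, where `β_b = 1 + (b-1)(nσ²-1)/(n-1)`. -/
theorem stmt1 (n b : ℕ) (hn : 2 ≤ n) (hb1 : 1 ≤ b) (hbn : b ≤ n)
    (v : Fin n → ℝ) (Q : Matrix (Fin n) (Fin n) ℝ) (hsym : Q.IsSymm)
    (hdiag : ∀ i, Q i i ≤ 1) (σ2 : ℝ) (hσ : 1 / (n : ℝ) ≤ σ2)
    (hspec : ‖Matrix.toEuclideanCLM (𝕜 := ℝ) Q‖ ≤ (n : ℝ) * σ2) :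
    (∑ A ∈ Finset.powersetCard b (Finset.univ : Finset (Fin n)),
        ∑ i, ∑ j, (if i ∈ A then v i else 0) * Q i j * (if j ∈ A then v j else 0))
      / (n.choose b : ℝ)
    ≤ ((b : ℝ) / n) * (1 + ((b : ℝ) - 1) * ((n : ℝ) * σ2 - 1) / ((n : ℝ) - 1))
        * (∑ i, (v i) ^ 2) :=
  stmt1_general n b hn hb1 hbn v Q hdiag σ2 hspec
end

section
/- Consider the SVM dual objective D(α) = -(1/(2λn²)) αᵀQα + (1/n)∑_i α_i with n = 2, λ = 1/2, Q the all-ones 2×2 matrix, and box constraints 0 ≤ α_i ≤ 1. Starting from α^{(0)} = (0,0) and performing naive parallel coordinate updates where each coordinate i is updated to argmax of D in that coordinate alone (with both updated simultaneously), the iterates alternate between (0,0) and (1,1), both with objective value 0, while the optimum α* = (1/2, 1/2) has D(α*) = 1/4. -/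
open Finset

/-- The SVM dual objective with `n = 2`, `λ = 1/2` and `Q` the all-ones `2×2`
matrix: `D(α) = -(1/(2λn²)) αᵀQα + (1/n)∑ α_i`. -/
noncomputable def naiveD (α : Fin 2 → ℝ) : ℝ :=
  -(1 / (2 * (1 / 2) * (2 : ℝ) ^ 2)) * (∑ i, ∑ j, α i * α j) + (1 / 2) * ∑ i, α i

/-- One step of naive mini-batched SDCA with `b = 2`: both coordinates are
simultaneously updated by `δ_i = clip_{[-α_i, 1-α_i]} ((λn - (Qe_i)ᵀα)/Q_ii)`,
where here `λn = 1`, `(Qe_i)ᵀα = α₀ + α₁` and `Q_ii = 1`. -/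
noncomputable def naiveStep (α : Fin 2 → ℝ) : Fin 2 → ℝ :=
  fun i => α i + max (-(α i)) (min (1 - α i) ((1 - (α 0 + α 1)) / 1))

lemma step0 : naiveStep (fun _ => (0 : ℝ)) = fun _ => (1 : ℝ) := by
  funext i; simp [naiveStep]

lemma step1 : naiveStep (fun _ => (1 : ℝ)) = fun _ => (0 : ℝ) := by
  funext i; norm_num [naiveStep]

lemma naiveD_simp (α : Fin 2 → ℝ) :
    naiveD α = -(1/4) * (α 0 + α 1)^2 + (1/2) * (α 0 + α 1) := by
  simp [naiveD, Fin.sum_univ_two]; ring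

/-- Failure of naive mini-batching: starting from `α⁽⁰⁾ = 0`, the iterates
alternate between `(0,0)` and `(1,1)`, both with objective value `0`, whereas
the optimum `α* = (1/2,1/2)` has `D(α*) = 1/4` (and is optimal over the box). -/
theorem stmt8 :
    (∀ t : ℕ, naiveStep^[t] (fun _ => 0) =
        if t % 2 = 0 then (fun _ => (0 : ℝ)) else (fun _ => (1 : ℝ)))
    ∧ (∀ t : ℕ, naiveD (naiveStep^[t] (fun _ => 0)) = 0)
    ∧ naiveD (fun _ => 1 / 2) = 1 / 4
    ∧ ∀ α : Fin 2 → ℝ, (∀ i, 0 ≤ α i) → (∀ i, α i ≤ 1) →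
        naiveD α ≤ naiveD (fun _ => 1 / 2) := by
  have key : ∀ t : ℕ, naiveStep^[t] (fun _ => 0) =
      if t % 2 = 0 then (fun _ => (0 : ℝ)) else (fun _ => (1 : ℝ)) := by
    intro t
    induction t with
    | zero => simp
    | succ t ih =>
      rw [Function.iterate_succ_apply', ih]
      rcases Nat.even_or_odd t with h | h
      · have h0 : t % 2 = 0 := Nat.even_iff.mp h
        have h1 : (t + 1) % 2 = 1 := by omega
        simp [h0, h1, step0]
      · have h0 : t % 2 = 1 := Nat.odd_iff.mp h
        have h1 : (t + 1) % 2 = 0 := by omega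
        simp [h0, h1, step1]
  refine ⟨key, ?_, ?_, ?_⟩
  · intro t
    rw [key t]
    split <;> rw [naiveD_simp] <;> norm_num
  · rw [naiveD_simp]; norm_num
  · intro α h0 h1
    rw [naiveD_simp, naiveD_simp]
    have := h0 0; have := h0 1; have := h1 0; have := h1 1
    nlinarith [sq_nonneg (α 0 + α 1 - 1)]
end

section
/- Suppose ε_t ≤ 2βG/(λ(2n + b(t - t₀))) for some t ≥ t₀, and ε_{t+1} ≤ (1 - bs/n)ε_t + b(s/n)²(βG)/(2λ) holds with s = 2n/(2n + b(t - t₀)). Then ε_{t+1} ≤ 2βG/(λ(2n + b(t+1 - t₀))). -/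
/-!
Write `x = 2n + b(t - t₀)` and `C = 2βG/λ`, so that `s/n = 2/x`. Since `2b ≤ 2n ≤ x` the
coefficient `1 - 2b/x` is nonnegative, and substituting `ε_t ≤ C/x` into the recurrence gives
`ε_{t+1} ≤ (1 - 2b/x) C/x + b (2/x)² C/4 = C (x - b)/x²`, which is at most `C/(x + b)`
because `(x + b)(x - b) ≤ x²`.
-/

lemma mul_sub_div_sq_le_div_add {C x b : ℝ} (hC : 0 ≤ C) (hx : 0 < x) (hxb : 0 < x + b) :
    C * (x - b) / x ^ 2 ≤ C / (x + b) := by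
  rw [div_le_div_iff₀ (by positivity) hxb]
  have hsq : (x - b) * (x + b) ≤ x ^ 2 := by nlinarith [sq_nonneg b]
  calc C * (x - b) * (x + b) = C * ((x - b) * (x + b)) := by ring
    _ ≤ C * x ^ 2 := mul_le_mul_of_nonneg_left hsq hC

lemma one_sub_div_mul_div_add_sq_mul (C x b : ℝ) (hx : x ≠ 0) :
    (1 - b * (2 / x)) * (C / x) + b * (2 / x) ^ 2 * (C / 4) = C * (x - b) / x ^ 2 := by
  field_simp
  ring

lemma le_div_add_of_le_div_of_le_recurrence {C x b ε ε' : ℝ} (hC : 0 ≤ C) (hb : 0 ≤ b)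
    (hbx : 2 * b ≤ x) (hx : 0 < x) (hε : ε ≤ C / x)
    (hε' : ε' ≤ (1 - b * (2 / x)) * ε + b * (2 / x) ^ 2 * (C / 4)) :
    ε' ≤ C / (x + b) := by
  have hcoef : 0 ≤ 1 - b * (2 / x) := by
    rw [sub_nonneg, ← mul_div_assoc, mul_comm, div_le_one hx]
    exact hbx
  calc ε' ≤ (1 - b * (2 / x)) * ε + b * (2 / x) ^ 2 * (C / 4) := hε'
    _ ≤ (1 - b * (2 / x)) * (C / x) + b * (2 / x) ^ 2 * (C / 4) := by gcongr
    _ = C * (x - b) / x ^ 2 := one_sub_div_mul_div_add_sq_mul C x b hx.ne'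
    _ ≤ C / (x + b) := mul_sub_div_sq_le_div_add hC hx (by linarith)

/-- Inductive step in the SDCA convergence proof: if
`ε_t ≤ 2βG/(λ(2n + b(t-t₀)))` and the per-step recurrence holds with
`s = 2n/(2n + b(t-t₀))`, then `ε_{t+1} ≤ 2βG/(λ(2n + b(t+1-t₀)))`. -/
theorem stmt15 (b n β G lam : ℝ) (hb : 0 < b) (hn : 0 < n) (hβ : 0 < β)
    (hG : 0 < G) (hlam : 0 < lam) (hbn : b ≤ n)
    (t t0 : ℤ) (ht : t0 ≤ t) (εt εt1 : ℝ)
    (h1 : εt ≤ 2 * β * G / (lam * (2 * n + b * ((t : ℝ) - (t0 : ℝ)))))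
    (h2 : εt1 ≤
        (1 - b * (2 * n / (2 * n + b * ((t : ℝ) - (t0 : ℝ)))) / n) * εt
          + b * ((2 * n / (2 * n + b * ((t : ℝ) - (t0 : ℝ)))) / n) ^ 2
              * (β * G) / (2 * lam)) :
    εt1 ≤ 2 * β * G / (lam * (2 * n + b * ((t : ℝ) + 1 - (t0 : ℝ)))) := by
  have hx : 2 * n ≤ 2 * n + b * ((t : ℝ) - t0) := by
    have : (t0 : ℝ) ≤ t := by exact_mod_cast ht
    nlinarith
  set x := 2 * n + b * ((t : ℝ) - t0)
  have hx0 : x ≠ 0 := by linarith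
  have hstep : 2 * n / x / n = 2 / x := by field_simp
  have hC (y : ℝ) : 2 * β * G / (lam * y) = 2 * β * G / lam / y := by rw [div_div]
  rw [show 2 * n + b * ((t : ℝ) + 1 - t0) = x + b by ring, hC]
  rw [hC] at h1
  rw [mul_div_assoc, hstep] at h2
  refine le_div_add_of_le_div_of_le_recurrence (by positivity) hb.le (by linarith) (by linarith)
    h1 (h2.trans_eq ?_)
  ring
end

section
/- Let n ≥ 2, 1 ≤ b ≤ n, λ > 0, σ² ∈ [1/n, 1], β_b = 1 + (b-1)(nσ²-1)/(n-1). Set t₀ = max{0, ⌈(n/b) log(2λn/β_b)⌉}. If a nonnegative sequence ε_t satisfies ε_{t+1} ≤ (1 - bs/n)ε_t + b(s/n)² β_b/(2λ) for every s ∈ (0,1] (the bound holding for each choice of s), and ε_0 ≤ 1, then with s = 1, ε_{t₀} ≤ β_b/(λn). -/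
/-! With `s = 1` the recurrence contracts `ε_t - D` by `r = 1 - b/n` towards `D = β_b/(2λn)`,
so `ε_t ≤ D + r^t` because `ε_0 ≤ 1`. Since `r^t ≤ exp(-bt/n)`, the choice of `t₀` makes
`r^{t₀} ≤ D`, hence `ε_{t₀} ≤ 2D`. -/

open Real

lemma sub_le_pow_mul_of_le_mul_add {r D : ℝ} {ε : ℕ → ℝ} (hr : 0 ≤ r)
    (h : ∀ t, ε (t + 1) ≤ r * ε t + (1 - r) * D) (t : ℕ) :
    ε t - D ≤ r ^ t * (ε 0 - D) := by
  induction t with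
  | zero => simp
  | succ t ih =>
    calc ε (t + 1) - D ≤ r * (ε t - D) := by linarith [h t]
      _ ≤ r * (r ^ t * (ε 0 - D)) := mul_le_mul_of_nonneg_left ih hr
      _ = r ^ (t + 1) * (ε 0 - D) := by ring

lemma one_sub_pow_le_inv_of_log_le {a c : ℝ} {t : ℕ} (ha : a ≤ 1) (hc : 0 < c)
    (hlog : log c ≤ a * t) : (1 - a) ^ t ≤ c⁻¹ :=
  calc (1 - a) ^ t ≤ exp (-a) ^ t := pow_le_pow_left₀ (by linarith) (one_sub_le_exp_neg a) t
    _ = exp (-(a * t)) := by rw [← exp_nat_mul]; ring_nf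
    _ ≤ exp (-log c) := exp_le_exp.mpr (by linarith)
    _ = c⁻¹ := by rw [exp_neg, exp_log hc]

lemma le_toNat_max_zero_ceil (x : ℝ) : x ≤ ((max 0 ⌈x⌉).toNat : ℝ) := by
  rw [show (max 0 ⌈x⌉).toNat = ⌈x⌉.toNat by omega, Int.ceil_toNat]
  exact Nat.le_ceil x

lemma one_le_batch_factor {n b : ℕ} {σ2 : ℝ} (hb1 : 1 ≤ b) (hbn : b ≤ n)
    (hσl : 1 / (n : ℝ) ≤ σ2) :
    1 ≤ 1 + ((b : ℝ) - 1) * ((n : ℝ) * σ2 - 1) / ((n : ℝ) - 1) := by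
  have hB : (1 : ℝ) ≤ b := by exact_mod_cast hb1
  have hN : (1 : ℝ) ≤ n := by exact_mod_cast hb1.trans hbn
  have hnσ : 1 ≤ (n : ℝ) * σ2 := by
    rwa [div_le_iff₀ (by linarith), mul_comm] at hσl
  have : 0 ≤ ((b : ℝ) - 1) * ((n : ℝ) * σ2 - 1) / ((n : ℝ) - 1) :=
    div_nonneg (mul_nonneg (by linarith) (by linarith)) (by linarith)
  linarith

theorem stmt17_general (n b : ℕ) (hb1 : 1 ≤ b) (hbn : b ≤ n)
    (σ2 lam : ℝ) (hσl : 1 / (n : ℝ) ≤ σ2) (hlam : 0 < lam)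
    (βb : ℝ) (hβ : βb = 1 + ((b : ℝ) - 1) * ((n : ℝ) * σ2 - 1) / ((n : ℝ) - 1))
    (ε : ℕ → ℝ) (hε0 : ε 0 ≤ 1)
    (hrec : ∀ s : ℝ, 0 < s → s ≤ 1 → ∀ t,
        ε (t + 1) ≤ (1 - (b : ℝ) * s / (n : ℝ)) * ε t
          + (b : ℝ) * (s / (n : ℝ)) ^ 2 * βb / (2 * lam))
    (t0 : ℕ)
    (ht0 : t0 = (max 0 ⌈((n : ℝ) / (b : ℝ)) *
        Real.log (2 * lam * (n : ℝ) / βb)⌉).toNat) :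
    ε t0 ≤ βb / (lam * (n : ℝ)) := by
  have hB : (0 : ℝ) < b := by exact_mod_cast hb1
  have hN : (0 : ℝ) < n := by exact_mod_cast hb1.trans hbn
  have hbn' : (b : ℝ) / n ≤ 1 := (div_le_one hN).mpr (by exact_mod_cast hbn)
  have hβpos : 0 < βb := hβ ▸ lt_of_lt_of_le one_pos (one_le_batch_factor hb1 hbn hσl)
  set D := βb / (2 * lam * n) with hD
  have hstep : ∀ t, ε (t + 1) ≤ (1 - b / n) * ε t + (1 - (1 - b / n)) * D := fun t => by
    convert hrec 1 one_pos le_rfl t using 2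
    · ring
    · rw [hD]; field_simp; ring
  have hlog : log (2 * lam * n / βb) ≤ b / n * t0 := by
    calc log (2 * lam * n / βb) = b / n * (n / b * log (2 * lam * n / βb)) := by field_simp
      _ ≤ b / n * t0 := by
        rw [ht0]; gcongr; exact le_toNat_max_zero_ceil _
  have hpow : (1 - b / n) ^ t0 ≤ D := by
    simpa only [inv_div] using one_sub_pow_le_inv_of_log_le hbn' (by positivity) hlog
  have hcontract := sub_le_pow_mul_of_le_mul_add (by linarith) hstep t0
  have hD0 : 0 ≤ D := by positivity
  calc ε t0 ≤ D + (1 - b / n) ^ t0 * (ε 0 - D) := by linarith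
    _ ≤ D + (1 - b / n) ^ t0 :=
      add_le_add_right (mul_le_of_le_one_right (pow_nonneg (by linarith) t0) (by linarith)) D
    _ ≤ 2 * D := by linarith
    _ = βb / (lam * n) := by rw [hD]; field_simp

/-- After `t₀ = max{0, ⌈(n/b) log(2λn/β_b)⌉}` iterations of the recurrence
`ε_{t+1} ≤ (1 - bs/n) ε_t + b(s/n)² β_b/(2λ)` (valid for every `s ∈ (0,1]`),
starting from `ε_0 ≤ 1`, the dual suboptimality satisfies `ε_{t₀} ≤ β_b/(λn)`. -/
theorem stmt17 (n b : ℕ) (hn : 2 ≤ n) (hb1 : 1 ≤ b) (hbn : b ≤ n)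
    (σ2 lam : ℝ) (hσl : 1 / (n : ℝ) ≤ σ2) (hσu : σ2 ≤ 1) (hlam : 0 < lam)
    (βb : ℝ) (hβ : βb = 1 + ((b : ℝ) - 1) * ((n : ℝ) * σ2 - 1) / ((n : ℝ) - 1))
    (ε : ℕ → ℝ) (hpos : ∀ t, 0 ≤ ε t) (hε0 : ε 0 ≤ 1)
    (hrec : ∀ s : ℝ, 0 < s → s ≤ 1 → ∀ t,
        ε (t + 1) ≤ (1 - (b : ℝ) * s / (n : ℝ)) * ε t
          + (b : ℝ) * (s / (n : ℝ)) ^ 2 * βb / (2 * lam))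
    (t0 : ℕ)
    (ht0 : t0 = (max 0 ⌈((n : ℝ) / (b : ℝ)) *
        Real.log (2 * lam * (n : ℝ) / βb)⌉).toNat) :
    ε t0 ≤ βb / (lam * (n : ℝ)) :=
  stmt17_general n b hb1 hbn σ2 lam hσl hlam βb hβ ε hε0 hrec t0 ht0
end

section
/- Suppose for each iteration t and every s ∈ [0,1] the expected dual increase satisfies E[D(α^{(t+1)})] − D(α^{(t)}) ≥ b((s/n)G(α^{(t)}) − (s/n)² β G/(2λ)), where G(α^{(t)}) ≥ 0 is the duality gap. Then choosing s = n/(b(T−T₀)) (assuming T − T₀ ≥ n/b so s ≤ 1) and averaging t from T₀ to T−1: E[(1/(T−T₀))∑_{t=T₀}^{T−1} G(α^{(t)})] ≤ (D(α*) − E[D(α^{(T₀)})]) + Gβ/(2b(T−T₀)λ). -/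
open Finset

/-!
With the step size `s = n / (b (T - T₀))` (admissible, i.e. `≤ 1`, exactly when
`T - T₀ ≥ n / b`) the per-iteration bound reads
`g t / (T - T₀) - βG / (2λ) / (b (T - T₀)²) ≤ d (t + 1) - d t`.
Summing over `t ∈ [T₀, T)` telescopes the right-hand side to `d T - d T₀ ≤ d* - d T₀`,
and the `T - T₀` copies of the constant add up to `Gβ / (2b (T - T₀) λ)`.
-/

theorem sum_Ico_le_sub_of_le_sub {d f : ℕ → ℝ} {m n : ℕ} (hmn : m ≤ n)
    (h : ∀ t, f t ≤ d (t + 1) - d t) : ∑ t ∈ Ico m n, f t ≤ d n - d m :=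
  (sum_le_sum fun t _ => h t).trans_eq (sum_Ico_sub d hmn)

theorem average_Ico_le_of_le_sub {d g : ℕ → ℝ} {c : ℝ} {m n : ℕ} (hmn : m < n)
    (h : ∀ t, g t / ((n : ℝ) - m) - c ≤ d (t + 1) - d t) :
    1 / ((n : ℝ) - m) * ∑ t ∈ Ico m n, g t ≤ d n - d m + ((n : ℝ) - m) * c := by
  have hsum := sum_Ico_le_sub_of_le_sub hmn.le h
  have hcard : ((#(Ico m n) : ℕ) : ℝ) = (n : ℝ) - m := by
    rw [Nat.card_Ico, Nat.cast_sub hmn.le]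
  rw [sum_sub_distrib, ← sum_div, sum_const, nsmul_eq_mul, hcard] at hsum
  linarith [one_div_mul_eq_div ((n : ℝ) - m) (∑ t ∈ Ico m n, g t)]

theorem stmt19_general (b n β G lam dstar : ℝ) (hb : 0 < b) (hn : 0 < n)
    (T0 T : ℕ) (hTn : n / b ≤ (T : ℝ) - (T0 : ℝ))
    (d g : ℕ → ℝ) (hd : ∀ t, d t ≤ dstar)
    (hrec : ∀ t, ∀ s : ℝ, 0 ≤ s → s ≤ 1 →
        d (t + 1) - d t ≥ b * ((s / n) * g t - (s / n) ^ 2 * β * G / (2 * lam))) :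
    (1 / ((T : ℝ) - (T0 : ℝ))) * ∑ t ∈ Finset.Ico T0 T, g t
      ≤ (dstar - d T0) + G * β / (2 * b * ((T : ℝ) - (T0 : ℝ)) * lam) := by
  set K : ℝ := (T : ℝ) - T0
  have hK : 0 < K := (div_pos hn hb).trans_le hTn
  have hT : T0 < T := by exact_mod_cast sub_pos.mp hK
  have hs1 : n / (b * K) ≤ 1 := by
    rw [← div_div]
    exact div_le_one_of_le₀ hTn hK.le
  have hstep : ∀ t, g t / K - β * G / (2 * lam) / (b * K ^ 2) ≤ d (t + 1) - d t := by
    intro t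
    convert hrec t (n / (b * K)) (by positivity) hs1 using 1
    field_simp
  have havg := average_Ico_le_of_le_sub hT hstep
  have hconst : K * (β * G / (2 * lam) / (b * K ^ 2)) = G * β / (2 * b * K * lam) := by
    field_simp
  linarith [hd T]

/-- If for each iteration `t` and every `s ∈ [0,1]` the dual increase satisfies
`d(t+1) - d(t) ≥ b((s/n) g(t) - (s/n)² βG/(2λ))`, with `d(t) ≤ d*` and
gaps `g(t) ≥ 0`, then choosing `s = n/(b(T-T₀))` (with `T - T₀ ≥ n/b`) and
averaging from `T₀` to `T-1`:
`(1/(T-T₀)) ∑ g(t) ≤ (d* - d(T₀)) + Gβ/(2b(T-T₀)λ)`. -/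
theorem stmt19 (b n β G lam dstar : ℝ) (hb : 0 < b) (hn : 0 < n) (hβ : 0 < β)
    (hG : 0 < G) (hlam : 0 < lam)
    (T0 T : ℕ) (hT : T0 < T) (hTn : n / b ≤ (T : ℝ) - (T0 : ℝ))
    (d g : ℕ → ℝ) (hg : ∀ t, 0 ≤ g t) (hd : ∀ t, d t ≤ dstar)
    (hrec : ∀ t, ∀ s : ℝ, 0 ≤ s → s ≤ 1 →
        d (t + 1) - d t ≥ b * ((s / n) * g t - (s / n) ^ 2 * β * G / (2 * lam))) :
    (1 / ((T : ℝ) - (T0 : ℝ))) * ∑ t ∈ Finset.Ico T0 T, g t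
      ≤ (dstar - d T0) + G * β / (2 * b * ((T : ℝ) - (T0 : ℝ)) * lam) :=
  stmt19_general b n β G lam dstar hb hn T0 T hTn d g hd hrec
end
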